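/- Let X be a random variable with continuous CDF F, threshold u with F(u) < 1, and suppose the excess distribution satisfies F_u(y) = G_{ξ,σ}(y) exactly for some 0 < ξ < 1, σ > 0 and all y ≥ 0. Then for α ∈ (F(u),1), CVaR_α(X) = u + (σ/(1-ξ))(1 + (s^ξ - 1)/ξ), where s = (1 - F(u))/(1 - α). -/

import Mathlib

/-!
Let `q = u + (σ/ξ)(s^ξ - 1)`. On `[u, ∞)` the tail `1 - F` is `(1 - F u)` times the generalized
Pareto survival function, which gives `F q = α` and `F < α` to the left of `q`; so `q` is the
`α`-quantile, and continuity of `F` gives `P(X ≥ q) = 1 - α`. By threshold stability the excess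
over `q` is again generalized Pareto, with scale `σ s^ξ`, and a generalized Pareto law with shape
`ξ < 1` has mean `scale / (1 - ξ)`. The layer-cake formula then yields
`CVaR_α = q + σ s^ξ / (1 - ξ)`, which rearranges to the stated expression.
-/

open Set Real MeasureTheory Filter Topology ProbabilityTheory

/-- `1 - G_{ξ,σ}`, the survival function of the generalized Pareto distribution. -/
noncomputable def gpdSurvival (ξ σ y : ℝ) : ℝ := (1 + ξ * y / σ) ^ (-1 / ξ)

section GPD

variable {ξ σ : ℝ}

@[simp]
lemma gpdSurvival_zero (ξ σ : ℝ) : gpdSurvival ξ σ 0 = 1 := by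
  simp [gpdSurvival]

lemma gpdSurvival_nonneg (hξ : 0 ≤ ξ) (hσ : 0 < σ) {t : ℝ} (ht : 0 ≤ t) :
    0 ≤ gpdSurvival ξ σ t :=
  rpow_nonneg (by positivity) _

lemma gpdSurvival_add (hξ : 0 ≤ ξ) (hσ : 0 < σ) {y t : ℝ} (hy : 0 ≤ y) (ht : 0 ≤ t) :
    gpdSurvival ξ σ (y + t) = gpdSurvival ξ σ y * gpdSurvival ξ (σ + ξ * y) t := by
  have hσy : 0 < σ + ξ * y := by positivity
  unfold gpdSurvival
  rw [← mul_rpow (by positivity) (by positivity)]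
  congr 1
  field_simp
  ring

lemma gpdSurvival_quantile (hξ : ξ ≠ 0) (hσ : σ ≠ 0) {s : ℝ} (hs : 0 < s) :
    gpdSurvival ξ σ (σ / ξ * (s ^ ξ - 1)) = s⁻¹ := by
  have hbase : 1 + ξ * (σ / ξ * (s ^ ξ - 1)) / σ = s ^ ξ := by field_simp; ring
  rw [gpdSurvival, hbase, ← rpow_mul hs.le, mul_div_cancel₀ _ hξ, rpow_neg_one]

lemma strictAntiOn_gpdSurvival (hξ : 0 < ξ) (hσ : 0 < σ) :
    StrictAntiOn (gpdSurvival ξ σ) (Ici 0) := by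
  intro x (hx : 0 ≤ x) y _ hxy
  exact rpow_lt_rpow_of_neg (by positivity) (by gcongr) (div_neg_of_neg_of_pos (by norm_num) hξ)

lemma hasDerivAt_gpdSurvival_primitive (hξ : 0 < ξ) (hξ1 : ξ ≠ 1) (hσ : 0 < σ) {t : ℝ}
    (ht : 0 ≤ t) :
    HasDerivAt (fun t ↦ -(σ / (1 - ξ)) * (1 + ξ * t / σ) ^ (1 - 1 / ξ))
      (gpdSurvival ξ σ t) t := by
  have hbase : HasDerivAt (fun t ↦ 1 + ξ * t / σ) (ξ / σ) t := by
    simpa using (((hasDerivAt_id t).const_mul ξ).div_const σ).const_add 1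
  refine ((hbase.rpow_const (p := 1 - 1 / ξ) (Or.inl (by positivity))).const_mul
    (-(σ / (1 - ξ)))).congr_deriv ?_
  have h1ξ : 1 - ξ ≠ 0 := sub_ne_zero.mpr hξ1.symm
  rw [gpdSurvival, show 1 - 1 / ξ - 1 = -1 / ξ by ring]
  field_simp
  ring

lemma tendsto_gpdSurvival_primitive (hξ : 0 < ξ) (hξ1 : ξ < 1) (hσ : 0 < σ) :
    Tendsto (fun t ↦ -(σ / (1 - ξ)) * (1 + ξ * t / σ) ^ (1 - 1 / ξ)) atTop (𝓝 0) := by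
  have hbase : Tendsto (fun t ↦ 1 + ξ * t / σ) atTop atTop :=
    tendsto_atTop_add_const_left _ _ ((tendsto_id.const_mul_atTop hξ).atTop_div_const hσ)
  have hexp : 1 - 1 / ξ = -(1 / ξ - 1) := by ring
  have hpos : 0 < 1 / ξ - 1 := by rw [sub_pos, lt_div_iff₀ hξ]; linarith
  rw [hexp]
  simpa using ((tendsto_rpow_neg_atTop hpos).comp hbase).const_mul (-(σ / (1 - ξ)))

lemma integrableOn_gpdSurvival (hξ : 0 < ξ) (hξ1 : ξ < 1) (hσ : 0 < σ) :
    IntegrableOn (gpdSurvival ξ σ) (Ioi 0) :=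
  integrableOn_Ioi_deriv_of_nonneg'
    (fun _ ht ↦ hasDerivAt_gpdSurvival_primitive hξ hξ1.ne hσ ht)
    (fun _ ht ↦ gpdSurvival_nonneg hξ.le hσ (le_of_lt ht))
    (tendsto_gpdSurvival_primitive hξ hξ1 hσ)

lemma integral_gpdSurvival (hξ : 0 < ξ) (hξ1 : ξ < 1) (hσ : 0 < σ) :
    ∫ t in Ioi 0, gpdSurvival ξ σ t = σ / (1 - ξ) := by
  rw [integral_Ioi_of_hasDerivAt_of_nonneg'
    (fun _ ht ↦ hasDerivAt_gpdSurvival_primitive hξ hξ1.ne hσ ht)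
    (fun _ ht ↦ gpdSurvival_nonneg hξ.le hσ (le_of_lt ht))
    (tendsto_gpdSurvival_primitive hξ hξ1 hσ)]
  simp

end GPD

section GPDTail

variable {F : ℝ → ℝ} {ξ σ u : ℝ}

lemma one_sub_eq_mul_gpdSurvival_of_excess (hFu : F u ≠ 1)
    (hexcess : ∀ y, 0 ≤ y →
      (F (y + u) - F u) / (1 - F u) = 1 - (1 + ξ * y / σ) ^ (-1 / ξ))
    {x : ℝ} (hx : u ≤ x) : 1 - F x = (1 - F u) * gpdSurvival ξ σ (x - u) := by
  have h := hexcess (x - u) (sub_nonneg.mpr hx)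
  rw [sub_add_cancel, div_eq_iff (sub_ne_zero.mpr hFu.symm)] at h
  rw [gpdSurvival]
  linarith

variable (htail : ∀ x, u ≤ x → 1 - F x = (1 - F u) * gpdSurvival ξ σ (x - u))
include htail

lemma strictMonoOn_Ici_of_gpdTail (hFu : F u < 1) (hξ : 0 < ξ) (hσ : 0 < σ) :
    StrictMonoOn F (Ici u) := by
  intro x (hx : u ≤ x) y (hy : u ≤ y) hxy
  have hlt := strictAntiOn_gpdSurvival hξ hσ (sub_nonneg.mpr hx) (sub_nonneg.mpr hy)
    (sub_lt_sub_right hxy u)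
  nlinarith [htail x hx, htail y hy]

/-- Threshold stability of the generalized Pareto tail. -/
lemma one_sub_apply_add_eq_of_gpdTail (hξ : 0 < ξ) (hσ : 0 < σ) {s t : ℝ} (hs : 1 ≤ s)
    (ht : 0 ≤ t) :
    1 - F (u + σ / ξ * (s ^ ξ - 1) + t) = (1 - F u) / s * gpdSurvival ξ (σ * s ^ ξ) t := by
  have hy : 0 ≤ σ / ξ * (s ^ ξ - 1) :=
    mul_nonneg (by positivity) (sub_nonneg.mpr (one_le_rpow hs hξ.le))
  have hscale : σ + ξ * (σ / ξ * (s ^ ξ - 1)) = σ * s ^ ξ := by field_simp; ring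
  rw [htail _ (by linarith), add_sub_right_comm, add_sub_cancel_left,
    gpdSurvival_add hξ.le hσ hy ht,
    gpdSurvival_quantile hξ.ne' hσ.ne' (by linarith), hscale, div_eq_mul_inv, mul_assoc]

end GPDTail

lemma sInf_setOf_apply_le_eq {F : ℝ → ℝ} (hF : Monotone F) {u q : ℝ}
    (hstrict : StrictMonoOn F (Ici u)) (hu : F u < F q) : sInf {x | F q ≤ F x} = q := by
  have huq : u ≤ q := le_of_lt (hF.reflect_lt hu)
  have : {x | F q ≤ F x} = Ici q := by
    ext x
    refine ⟨fun (hx : F q ≤ F x) ↦ show q ≤ x from not_lt.mp fun hxq ↦ ?_,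
      fun hx ↦ hF hx⟩
    rcases lt_or_ge x u with hxu | hxu
    · exact (hu.trans_le hx).not_ge (hF hxu.le)
    · exact (hstrict hxu huq hxq).not_ge hx
  rw [this, csInf_Ici]

section Tail

variable {Ω : Type*} [MeasurableSpace Ω] {μ : Measure Ω}

lemma integrable_of_integrableOn_measureReal_lt [IsFiniteMeasure μ] {g : Ω → ℝ}
    (hg0 : 0 ≤ g) (hg : Measurable g)
    (htail : IntegrableOn (fun t ↦ μ.real {ω | t < g ω}) (Ioi 0)) :
    Integrable g μ := by
  refine ⟨hg.aestronglyMeasurable, ?_⟩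
  rw [hasFiniteIntegral_iff_ofReal (.of_forall hg0),
    lintegral_eq_lintegral_meas_lt μ (.of_forall hg0) hg.aemeasurable]
  convert htail.lintegral_lt_top using 3 with t
  exact (ofReal_measureReal (measure_ne_top μ _)).symm

lemma setIntegral_setOf_le_eq_add_integral_tail [IsFiniteMeasure μ] {X : Ω → ℝ}
    (hX : Measurable X) (q : ℝ)
    (htail : IntegrableOn (fun t ↦ μ.real {ω | q + t < X ω}) (Ioi 0)) :
    ∫ ω in {ω | q ≤ X ω}, X ω ∂μ
      = q * μ.real {ω | q ≤ X ω} + ∫ t in Ioi 0, μ.real {ω | q + t < X ω} := by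
  set S := {ω | q ≤ X ω}
  have hS : MeasurableSet S := measurableSet_le measurable_const hX
  set g := S.indicator fun ω ↦ X ω - q
  have hg0 : 0 ≤ g := indicator_nonneg fun ω (hω : q ≤ X ω) ↦ sub_nonneg.mpr hω
  have hlevel : ∀ t ∈ Ioi (0 : ℝ), μ.real {ω | t < g ω} = μ.real {ω | q + t < X ω} := by
    intro t (ht : 0 < t)
    congr 1
    ext ω
    by_cases hω : q ≤ X ω
    · simp [g, S, hω, lt_sub_iff_add_lt']
    · simp only [g, S, mem_ofPred_eq, indicator_of_notMem (show ω ∉ S from hω)]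
      constructor <;> intro h <;> linarith
  have hg : Integrable g μ :=
    integrable_of_integrableOn_measureReal_lt hg0 ((hX.sub_const q).indicator hS)
      (htail.congr_fun (fun t ht ↦ (hlevel t ht).symm) measurableSet_Ioi)
  have hXS : IntegrableOn (fun ω ↦ X ω - q) S μ := (integrable_indicator_iff hS).mp hg
  calc ∫ ω in S, X ω ∂μ = ∫ ω in S, (X ω - q) ∂μ + ∫ _ in S, q ∂μ := by
        rw [← integral_add hXS (integrableOn_const (measure_ne_top μ S))]
        simp
    _ = ∫ ω, g ω ∂μ + q * μ.real S := by
        rw [integral_indicator hS, setIntegral_const, smul_eq_mul, mul_comm]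
    _ = _ := by
        rw [hg.integral_eq_integral_meas_lt (.of_forall hg0),
          setIntegral_congr_fun measurableSet_Ioi hlevel, add_comm]

lemma setIntegral_setOf_le_eq_of_gpdSurvival_tail [IsFiniteMeasure μ] {X : Ω → ℝ}
    (hX : Measurable X) {ξ σ c q : ℝ} (hξ : 0 < ξ) (hξ1 : ξ < 1) (hσ : 0 < σ)
    (hmass : μ.real {ω | q ≤ X ω} = c)
    (htail : ∀ t ∈ Ioi (0 : ℝ), μ.real {ω | q + t < X ω} = c * gpdSurvival ξ σ t) :
    ∫ ω in {ω | q ≤ X ω}, X ω ∂μ = c * (q + σ / (1 - ξ)) := by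
  rw [setIntegral_setOf_le_eq_add_integral_tail hX q
      (IntegrableOn.congr_fun ((integrableOn_gpdSurvival hξ hξ1 hσ).const_mul c)
        (fun t ht ↦ (htail t ht).symm) measurableSet_Ioi),
    setIntegral_congr_fun measurableSet_Ioi htail, integral_const_mul,
    integral_gpdSurvival hξ hξ1 hσ, hmass]
  ring

variable [IsProbabilityMeasure μ] {X : Ω → ℝ}

lemma cdf_map_apply (hX : Measurable X) (x : ℝ) :
    cdf (μ.map X) x = μ.real {ω | X ω ≤ x} := by
  have := Measure.isProbabilityMeasure_map (μ := μ) hX.aemeasurable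
  rw [cdf_eq_real, map_measureReal_apply hX measurableSet_Iic]
  rfl

lemma measureReal_setOf_lt_eq_one_sub_cdf (hX : Measurable X) (x : ℝ) :
    μ.real {ω | x < X ω} = 1 - cdf (μ.map X) x := by
  rw [cdf_map_apply hX, ← probReal_compl_eq_one_sub (measurableSet_le hX measurable_const)]
  simp only [compl_ofPred, not_le]

lemma measureReal_setOf_le_eq_one_sub_cdf (hX : Measurable X) {x : ℝ}
    (hx : ContinuousAt (cdf (μ.map X)) x) :
    μ.real {ω | x ≤ X ω} = 1 - cdf (μ.map X) x := by
  have := Measure.isProbabilityMeasure_map (μ := μ) hX.aemeasurable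
  have hleft : Function.leftLim (cdf (μ.map X)) x = cdf (μ.map X) x :=
    (monotone_cdf _).continuousWithinAt_Iio_iff_leftLim_eq.mp hx.continuousWithinAt
  have hIci := (cdf (μ.map X)).measure_Ici (tendsto_cdf_atTop _) x
  rw [measure_cdf, hleft] at hIci
  rw [show {ω | x ≤ X ω} = X ⁻¹' Ici x from rfl,
    ← map_measureReal_apply hX measurableSet_Ici,
    measureReal_def, hIci, ENNReal.toReal_ofReal (sub_nonneg.mpr (cdf_le_one _ _))]

end Tail

theorem cvar_pot_formula_general {Ω : Type*} [MeasurableSpace Ω] (μ : Measure Ω)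
    [IsProbabilityMeasure μ] (X : Ω → ℝ) (hX : Measurable X)
    (ξ σ u α : ℝ) (hξ0 : 0 < ξ) (hξ1 : ξ < 1) (hσ : 0 < σ)
    (F : ℝ → ℝ) (hF : F = fun x => (μ {ω | X ω ≤ x}).toReal)
    (hFcont : Continuous F)
    (hexcess : ∀ y : ℝ, 0 ≤ y →
      (F (y + u) - F u) / (1 - F u) = 1 - (1 + ξ * y / σ) ^ (-1/ξ))
    (hα0 : F u < α) (hα1 : α < 1) :
    (∫ ω in {ω | sInf {x : ℝ | α ≤ F x} ≤ X ω}, X ω ∂μ) / (1 - α)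
      = u + (σ / (1 - ξ)) * (1 + (((1 - F u) / (1 - α)) ^ ξ - 1) / ξ) := by
  have h1α : 0 < 1 - α := by linarith
  set s := (1 - F u) / (1 - α) with hs_def
  set q := u + σ / ξ * (s ^ ξ - 1) with hq_def
  have hs : 1 < s := (one_lt_div h1α).mpr (by linarith)
  have hcdf : F = cdf (μ.map X) := funext fun x ↦ by rw [hF, cdf_map_apply hX]; rfl
  have htail x (hx : u ≤ x) := one_sub_eq_mul_gpdSurvival_of_excess (by linarith) hexcess hx
  have hshift : ∀ t, 0 ≤ t → 1 - F (q + t) = (1 - α) * gpdSurvival ξ (σ * s ^ ξ) t := by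
    intro t ht
    rw [one_sub_apply_add_eq_of_gpdTail htail hξ0 hσ hs.le ht, hs_def,
      div_div_cancel₀ (by linarith)]
  have hFq : F q = α := by simpa using hshift 0 le_rfl
  have hquantile : sInf {x | α ≤ F x} = q :=
    hFq ▸ sInf_setOf_apply_le_eq (hcdf ▸ monotone_cdf _)
      (strictMonoOn_Ici_of_gpdTail htail (by linarith) hξ0 hσ) (hFq ▸ hα0)
  have hmass : μ.real {ω | q ≤ X ω} = 1 - α := by
    rw [measureReal_setOf_le_eq_one_sub_cdf hX (hcdf ▸ hFcont.continuousAt), ← hcdf, hFq]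
  have hexc : ∀ t ∈ Ioi (0 : ℝ),
      μ.real {ω | q + t < X ω} = (1 - α) * gpdSurvival ξ (σ * s ^ ξ) t :=
    fun t ht ↦ by rw [measureReal_setOf_lt_eq_one_sub_cdf hX, ← hcdf, hshift t (le_of_lt ht)]
  rw [hquantile,
    setIntegral_setOf_le_eq_of_gpdSurvival_tail hX hξ0 hξ1 (by positivity) hmass hexc, hq_def]
  have h1ξ : 1 - ξ ≠ 0 := (sub_pos.mpr hξ1).ne'
  field_simp
  ring

/-- Let X be a random variable with continuous CDF F, let u be a threshold with F(u) < 1,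
and suppose the excess distribution is exactly GPD:
`(F(y+u) - F(u))/(1 - F(u)) = 1 - (1 + ξy/σ)^(-1/ξ)` for all y ≥ 0, with 0 < ξ < 1, σ > 0.
Then for α ∈ (F(u), 1), `CVaR_α(X) = E[X | X ≥ q_α] = u + (σ/(1-ξ))(1 + (s^ξ - 1)/ξ)`,
where `s = (1 - F(u))/(1 - α)` and `q_α = inf {x : F(x) ≥ α}`. -/
theorem cvar_pot_formula {Ω : Type*} [MeasurableSpace Ω] (μ : Measure Ω)
    [IsProbabilityMeasure μ] (X : Ω → ℝ) (hX : Measurable X)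
    (ξ σ u α : ℝ) (hξ0 : 0 < ξ) (hξ1 : ξ < 1) (hσ : 0 < σ)
    (F : ℝ → ℝ) (hF : F = fun x => (μ {ω | X ω ≤ x}).toReal)
    (hFcont : Continuous F) (hFu : F u < 1)
    (hexcess : ∀ y : ℝ, 0 ≤ y →
      (F (y + u) - F u) / (1 - F u) = 1 - (1 + ξ * y / σ) ^ (-1/ξ))
    (hα0 : F u < α) (hα1 : α < 1) :
    (∫ ω in {ω | sInf {x : ℝ | α ≤ F x} ≤ X ω}, X ω ∂μ) / (1 - α)
      = u + (σ / (1 - ξ)) * (1 + (((1 - F u) / (1 - α)) ^ ξ - 1) / ξ) :=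
  cvar_pot_formula_general μ X hX ξ σ u α hξ0 hξ1 hσ F hF hFcont hexcess hα0 hα1
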